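/- For every integer q ≥ 7, one has 1 < 2cos²(π/q) − 1/2 ≤ 2cos(π/q)(2cos²(π/q) − 1), with equality on the right if and only if q = 7. -/

import Mathlib

/-!
The number `a = cos (π / 7)` is a root of `8 x³ - 4 x² - 4 x + 1`, and for this root
`2 c (2 c² - 1) - (2 c² - 1/2) = (c - a) (4 c² + 4 a c + 4 a² - 2 c - 2 a - 2)`.
The second factor is positive for `c ≥ a > 2/3`, and `c = cos (π / q)` increases in `q`,
so the difference is nonnegative and vanishes only at `q = 7`. The lower bound is
`cos² (π / q) > cos² (π / 6) = 3/4`.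
-/

open Real

lemma cos_pi_div_seven_cubic :
    8 * cos (π / 7) ^ 3 - 4 * cos (π / 7) ^ 2 - 4 * cos (π / 7) + 1 = 0 := by
  set a := cos (π / 7)
  have ha : 0 < a := cos_pos_of_mem_Ioo ⟨by linarith [pi_pos], by linarith [pi_pos]⟩
  -- `cos (4π/7) = -cos (3π/7)`, expanded in `a`, is the cubic times `a + 1`.
  have h : cos (2 * (2 * (π / 7))) = -cos (3 * (π / 7)) := by
    rw [show 2 * (2 * (π / 7)) = π - 3 * (π / 7) by ring, cos_pi_sub]
  rw [cos_two_mul, cos_two_mul, cos_three_mul] at h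
  have hfactor : (a + 1) * (8 * a ^ 3 - 4 * a ^ 2 - 4 * a + 1) = 0 := by
    linear_combination h
  exact (mul_eq_zero.mp hfactor).resolve_left (by positivity)

lemma three_div_four_lt_cos_sq {x : ℝ} (h0 : 0 ≤ x) (hx : x < π / 6) :
    3 / 4 < cos x ^ 2 := by
  have h2x : 1 / 2 < cos (2 * x) := by
    rw [← cos_pi_div_three]
    exact cos_lt_cos_of_nonneg_of_le_pi (by positivity) (by linarith [pi_pos]) (by linarith)
  rw [cos_sq x]
  linarith

lemma cos_pi_div_le_cos_pi_div {m n : ℕ} (hm : 0 < m) (hmn : m ≤ n) :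
    cos (π / m) ≤ cos (π / n) := by
  have hm' : (1 : ℝ) ≤ m := by exact_mod_cast hm
  have hmn' : (m : ℝ) ≤ n := by exact_mod_cast hmn
  apply cos_le_cos_of_nonneg_of_le_pi (by positivity) (div_le_self pi_pos.le hm')
  exact div_le_div_of_nonneg_left pi_pos.le (by linarith) hmn'

lemma cos_pi_div_inj {m n : ℕ} (hm : 0 < m) (hn : 0 < n) :
    cos (π / m) = cos (π / n) ↔ m = n := by
  have hm' : (1 : ℝ) ≤ m := by exact_mod_cast hm
  have hn' : (1 : ℝ) ≤ n := by exact_mod_cast hn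
  refine ⟨fun h ↦ ?_, fun h ↦ h ▸ rfl⟩
  have hdiv : π / m = π / n :=
    injOn_cos ⟨by positivity, div_le_self pi_pos.le hm'⟩
      ⟨by positivity, div_le_self pi_pos.le hn'⟩ h
  rw [div_eq_div_iff (by positivity) (by positivity), mul_right_inj' pi_ne_zero] at hdiv
  exact_mod_cast hdiv.symm

lemma sub_le_mul_of_cubic_root {a c : ℝ} (hroot : 8 * a ^ 3 - 4 * a ^ 2 - 4 * a + 1 = 0)
    (ha : 2 / 3 < a) (hac : a ≤ c) :
    2 * c ^ 2 - 1 / 2 ≤ 2 * c * (2 * c ^ 2 - 1) ∧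
      (2 * c ^ 2 - 1 / 2 = 2 * c * (2 * c ^ 2 - 1) ↔ c = a) := by
  have hfactor : 2 * c * (2 * c ^ 2 - 1) - (2 * c ^ 2 - 1 / 2) =
      (c - a) * (4 * c ^ 2 + 4 * a * c + 4 * a ^ 2 - 2 * c - 2 * a - 2) := by
    linear_combination (1 / 2 : ℝ) * hroot
  have hpos : 0 < 4 * c ^ 2 + 4 * a * c + 4 * a ^ 2 - 2 * c - 2 * a - 2 := by nlinarith
  refine ⟨?_, ⟨fun heq ↦ ?_, fun h ↦ by rw [h] at hfactor ⊢; linarith⟩⟩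
  · nlinarith [mul_nonneg (sub_nonneg.mpr hac) hpos.le]
  · have : (c - a) * (4 * c ^ 2 + 4 * a * c + 4 * a ^ 2 - 2 * c - 2 * a - 2) = 0 := by
      linarith
    linarith [(mul_eq_zero.mp this).resolve_right hpos.ne']

theorem stmt_11 (q : ℕ) (hq : 7 ≤ q) :
    1 < 2 * Real.cos (π / q) ^ 2 - 1/2 ∧
    2 * Real.cos (π / q) ^ 2 - 1/2
      ≤ 2 * Real.cos (π / q) * (2 * Real.cos (π / q) ^ 2 - 1) ∧
    (2 * Real.cos (π / q) ^ 2 - 1/2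
      = 2 * Real.cos (π / q) * (2 * Real.cos (π / q) ^ 2 - 1) ↔ q = 7) := by
  have hq' : (7 : ℝ) ≤ q := by exact_mod_cast hq
  have hsmall : π / q < π / 6 :=
    div_lt_div_of_pos_left pi_pos (by norm_num) (by linarith)
  have hc : 3 / 4 < cos (π / q) ^ 2 := three_div_four_lt_cos_sq (by positivity) hsmall
  have hac : cos (π / (7 : ℕ)) ≤ cos (π / q) := cos_pi_div_le_cos_pi_div (by norm_num) hq
  have ha : 2 / 3 < cos (π / (7 : ℕ)) := by
    have h0 : 0 < cos (π / (7 : ℕ)) :=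
      cos_pos_of_mem_Ioo ⟨by linarith [pi_pos], by push_cast; linarith [pi_pos]⟩
    have h2 := three_div_four_lt_cos_sq (x := π / (7 : ℕ)) (by positivity)
      (by push_cast; linarith [pi_pos])
    nlinarith
  obtain ⟨hle, hiff⟩ := sub_le_mul_of_cubic_root (by exact_mod_cast cos_pi_div_seven_cubic) ha hac
  refine ⟨by linarith, hle, ?_⟩
  rw [hiff, cos_pi_div_inj (by omega) (by norm_num)]
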